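/- arXiv:2011.08530 — 3 statements merged into one kernel-verified Lean document; each statement's English description precedes it below -/
import Mathlib

section
/- Let X be a ℤ^d-valued random vector such that a^T X has infinitely divisible distribution for every a ∈ ℝ^d. Then the distribution of X is infinitely divisible. -/
open MeasureTheory Complex Real Filter Topology

noncomputable section

/-- convolution of two measures on an additive monoid -/
def mconv {V : Type*} [MeasurableSpace V] [Add V] (μ ν : Measure V) : Measure V :=
  (μ.prod ν).map (fun p => p.1 + p.2)

/-- n-fold convolution power -/
def convPow {V : Type*} [MeasurableSpace V] [AddMonoid V] (μ : Measure V) : ℕ → Measure V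
  | 0 => Measure.dirac 0
  | n + 1 => mconv μ (convPow μ n)

/-- a probability measure is infinitely divisible -/
def InfDiv {V : Type*} [MeasurableSpace V] [AddMonoid V] (μ : Measure V) : Prop :=
  ∀ n : ℕ, 0 < n → ∃ ρ : Measure V, IsProbabilityMeasure ρ ∧ μ = convPow ρ n

/-- characteristic function of a measure on ℝ^d -/
def charFun {d : ℕ} (μ : Measure (Fin d → ℝ)) (z : Fin d → ℝ) : ℂ :=
  ∫ x, Complex.exp (Complex.I * (∑ j, z j * x j)) ∂μ

/-- embedding of the lattice ℤ^d into ℝ^d -/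
def intCast {d : ℕ} (n : Fin d → ℤ) : Fin d → ℝ := fun j => (n j : ℝ)

/-- μ is concentrated on ℤ^d -/
def ZdValued {d : ℕ} (μ : Measure (Fin d → ℝ)) : Prop :=
  μ (Set.range (intCast (d := d))) = 1

/-- integral of a complex-valued function against a (finite) signed measure -/
def sIntegral {α : Type*} [MeasurableSpace α] (ν : SignedMeasure α) (f : α → ℂ) : ℂ :=
  (∫ x, f x ∂ν.toJordanDecomposition.posPart) - ∫ x, f x ∂ν.toJordanDecomposition.negPart

/-- integral of a complex-valued function against a (finite) complex measure -/
def cIntegral {α : Type*} [MeasurableSpace α] (ν : ComplexMeasure α) (f : α → ℂ) : ℂ :=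
  sIntegral ν.re f + Complex.I * sIntegral ν.im f

/-- a vector measure vanishes outside the set `S` -/
def SupportedIn {α M : Type*} [MeasurableSpace α] [AddCommMonoid M] [TopologicalSpace M]
    (ν : VectorMeasure α M) (S : Set α) : Prop :=
  ∀ B : Set α, MeasurableSet B → B ∩ S = ∅ → ν B = 0

/-- the lattice ℤ^d minus the origin, as a subset of ℝ^d -/
def latticeNZ (d : ℕ) : Set (Fin d → ℝ) :=
  {x | ∃ n : Fin d → ℤ, n ≠ 0 ∧ x = intCast n}

/-- membership in the d-dimensional Wiener algebra -/
def InWiener {d : ℕ} (f : (Fin d → ℝ) → ℂ) : Prop :=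
  ∃ c : (Fin d → ℤ) → ℂ, Summable (fun n => ‖c n‖) ∧
    ∀ z, f z = ∑' n : Fin d → ℤ, c n * Complex.exp (Complex.I * (∑ j, (n j : ℝ) * z j))

/-- Euclidean norm on `Fin d → ℝ` -/
def enorm' {d : ℕ} (x : Fin d → ℝ) : ℝ := Real.sqrt (∑ j, x j ^ 2)

end

/-!
Pick `a ∈ ℝ^d` with `ℤ`-linearly independent coordinates (powers of a transcendental number), so
that `L x = a ⬝ᵥ x` is injective on the lattice `ℤ^d`. The law of `L X` is `ν^{*n}` and lives on the
countable group `C = L(ℤ^d)`. By Fubini, `ν` lives on a single coset `x₀ + C`; as `ν^{*n}` then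
lives on `n x₀ + C` as well as on `C`, we get `n x₀ = L k` for some `k ∈ ℤ^d`. Transporting `ν`
along the injection `m ↦ L (k / n + m)` of `ℤ^d` onto `x₀ + C` gives `ρ`, carried by `k / n + ℤ^d`,
with `L ρ = ν`; then `ρ^{*n}` is carried by `k + ℤ^d = ℤ^d`. Both `ρ^{*n}` and the law of `X` live on
`ℤ^d` and have the same image `ν^{*n}` under `L`, which is injective there, so they coincide.
-/

open Function

section Convolution

variable {V : Type*} [MeasurableSpace V]

instance isProbabilityMeasure_mconv [Add V] [MeasurableAdd₂ V] (μ ν : Measure V)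
    [IsProbabilityMeasure μ] [IsProbabilityMeasure ν] : IsProbabilityMeasure (mconv μ ν) :=
  Measure.isProbabilityMeasure_map measurable_add.aemeasurable

instance isProbabilityMeasure_convPow [AddMonoid V] [MeasurableAdd₂ V] (μ : Measure V)
    [IsProbabilityMeasure μ] (n : ℕ) : IsProbabilityMeasure (convPow μ n) := by
  induction n with
  | zero => exact inferInstanceAs (IsProbabilityMeasure (Measure.dirac 0))
  | succ n ih => exact isProbabilityMeasure_mconv μ _

lemma map_mconv {W : Type*} [MeasurableSpace W] [AddZeroClass V] [AddZeroClass W]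
    [MeasurableAdd₂ V] [MeasurableAdd₂ W] (L : V →+ W) (hL : Measurable L) (μ ν : Measure V)
    [SFinite μ] [SFinite ν] : (mconv μ ν).map L = mconv (μ.map L) (ν.map L) := by
  rw [mconv, mconv, Measure.map_prod_map _ _ hL hL, Measure.map_map measurable_add (hL.prodMap hL),
    Measure.map_map hL measurable_add]
  congr 1
  ext p
  exact map_add L p.1 p.2

lemma map_convPow {W : Type*} [MeasurableSpace W] [AddMonoid V] [AddMonoid W] [MeasurableAdd₂ V]
    [MeasurableAdd₂ W] (L : V →+ W) (hL : Measurable L) (μ : Measure V) [IsProbabilityMeasure μ]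
    (n : ℕ) : (convPow μ n).map L = convPow (μ.map L) n := by
  induction n with
  | zero => exact (Measure.map_dirac' hL 0).trans (by rw [map_zero]; rfl)
  | succ n ih => exact (map_mconv L hL μ (convPow μ n)).trans (by rw [ih]; rfl)

lemma exists_ae_add_mem_of_mconv [Add V] [MeasurableAdd₂ V] {σ τ : Measure V} [SFinite σ]
    [SFinite τ] [NeZero τ] {S : Set V} (hS : MeasurableSet S)
    (h : ∀ᵐ z ∂mconv σ τ, z ∈ S) : ∃ y, ∀ᵐ x ∂σ, x + y ∈ S := by
  have h' := Measure.ae_ae_of_ae_prod ((ae_map_iff measurable_add.aemeasurable hS).1 h)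
  exact ((Measure.ae_ae_comm (p := fun x y => x + y ∈ S) (measurable_add hS)).1 h').exists

end Convolution

section Coset

variable {G : Type*} [AddCommGroup G] [MeasurableSpace G] [MeasurableAdd₂ G] [MeasurableSub G]
  {H : AddSubgroup G}

lemma ae_sub_nsmul_mem_convPow (hH : MeasurableSet (H : Set G)) {ρ : Measure G}
    [IsProbabilityMeasure ρ] {x : G} (hρ : ∀ᵐ z ∂ρ, z - x ∈ H) (n : ℕ) :
    ∀ᵐ z ∂convPow ρ n, z - n • x ∈ H := by
  have hmeas (n : ℕ) : MeasurableSet {z | z - n • x ∈ H} := measurable_sub_const _ hH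
  induction n with
  | zero =>
    change ∀ᵐ z ∂Measure.dirac 0, _
    rw [ae_dirac_iff (hmeas 0)]
    simp
  | succ n ih =>
    change ∀ᵐ z ∂(ρ.prod (convPow ρ n)).map (fun p => p.1 + p.2), _
    rw [ae_map_iff measurable_add.aemeasurable (hmeas _)]
    filter_upwards [Measure.quasiMeasurePreserving_fst.ae hρ,
      Measure.quasiMeasurePreserving_snd.ae ih] with p h₁ h₂
    convert H.add_mem h₁ h₂ using 1
    rw [succ_nsmul']
    abel

lemma exists_ae_sub_mem_of_convPow (hH : MeasurableSet (H : Set G)) {ρ : Measure G}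
    [IsProbabilityMeasure ρ] {n : ℕ} (hn : 0 < n) (h : ∀ᵐ z ∂convPow ρ n, z ∈ H) :
    ∃ x, (∀ᵐ z ∂ρ, z - x ∈ H) ∧ n • x ∈ H := by
  obtain ⟨k, rfl⟩ := Nat.exists_eq_add_of_lt hn
  obtain ⟨y, hy⟩ := exists_ae_add_mem_of_mconv hH h
  have hρ : ∀ᵐ z ∂ρ, z - -y ∈ H := by simpa only [sub_neg_eq_add, SetLike.mem_coe] using hy
  refine ⟨-y, hρ, ?_⟩
  obtain ⟨z, hz, hzy⟩ := (h.and (ae_sub_nsmul_mem_convPow hH hρ _)).exists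
  simpa using H.sub_mem hz hzy

end Coset

section Embedding

variable {ι V W : Type*} [MeasurableSpace ι] [MeasurableSpace V] [MeasurableSpace W]

lemma measurableEmbedding_of_injective_of_countable [DiscreteMeasurableSpace ι] [Countable ι]
    [MeasurableSingletonClass V] {f : ι → V} (hf : Injective f) : MeasurableEmbedding f :=
  ⟨hf, .of_discrete, fun s _ => (s.to_countable.image f).measurableSet⟩

lemma MeasurableEmbedding.map_comap_of_ae_mem_range {f : ι → V} (hf : MeasurableEmbedding f)
    {μ : Measure V} (h : ∀ᵐ x ∂μ, x ∈ Set.range f) : (μ.comap f).map f = μ := by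
  rw [hf.map_comap, Measure.restrict_eq_self_of_ae_mem h]

lemma MeasurableEmbedding.ext_of_map_eq {f : ι → V} (hf : MeasurableEmbedding f) {L : V → W}
    (hL : Measurable L) (hLf : MeasurableEmbedding (L ∘ f)) {μ ν : Measure V}
    (hμ : ∀ᵐ x ∂μ, x ∈ Set.range f) (hν : ∀ᵐ x ∂ν, x ∈ Set.range f)
    (h : μ.map L = ν.map L) : μ = ν := by
  rw [← hf.map_comap_of_ae_mem_range hμ, ← hf.map_comap_of_ae_mem_range hν] at h ⊢
  rw [Measure.map_map hL hf.measurable, Measure.map_map hL hf.measurable] at h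
  rw [← hLf.comap_map (μ.comap f), h, hLf.comap_map]

lemma exists_map_eq_of_ae_mem_range [DiscreteMeasurableSpace ι] {f : ι → V} {L : V → W}
    (hL : Measurable L) (hLf : MeasurableEmbedding (L ∘ f)) (hf : MeasurableSet (Set.range f))
    {ν : Measure W} (hν : ∀ᵐ y ∂ν, y ∈ Set.range (L ∘ f)) :
    ∃ μ : Measure V, μ.map L = ν ∧ ∀ᵐ x ∂μ, x ∈ Set.range f :=
  ⟨(ν.comap (L ∘ f)).map f,
    by rw [Measure.map_map hL .of_discrete, hLf.map_comap_of_ae_mem_range hν],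
    ae_map_mem_range f hf _⟩

end Embedding

lemma exists_linearIndependent_int_real (d : ℕ) : ∃ a : Fin d → ℝ, LinearIndependent ℤ a := by
  have ht := transcendental_iff_injective.1 (transcendental_liouvilleNumber (le_refl 2))
  have hpow := (Polynomial.basisMonomials ℤ).linearIndependent.map'
    (Polynomial.aeval (liouvilleNumber 2)).toLinearMap (LinearMap.ker_eq_bot.2 ht)
  exact ⟨_, hpow.comp (fun j : Fin d => (j : ℕ)) Fin.val_injective⟩

section Lattice

variable {d : ℕ}

def intCastAddHom (d : ℕ) : (Fin d → ℤ) →+ (Fin d → ℝ) :=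
  AddMonoidHom.compLeft (Int.castAddHom ℝ) (Fin d)

lemma intCastAddHom_apply (m : Fin d → ℤ) : intCastAddHom d m = intCast m := rfl

lemma intCastAddHom_injective (d : ℕ) : Injective (intCastAddHom d) :=
  fun _ _ h => funext fun j => Int.cast_injective (congrFun h j)

lemma measurableSet_range_intCastAddHom :
    MeasurableSet ((intCastAddHom d).range : Set (Fin d → ℝ)) :=
  (Set.countable_range _).measurableSet

lemma injective_dotProduct_intCast {a : Fin d → ℝ} (ha : LinearIndependent ℤ a) :
    Injective fun m => a ⬝ᵥ intCast m := by
  convert ha.fintypeLinearCombination_injective using 1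
  ext m
  simp [dotProduct, Fintype.linearCombination_apply, intCast, zsmul_eq_mul, mul_comm]

lemma exists_map_eq_ae_convPow_mem_range {L : (Fin d → ℝ) →ₗ[ℝ] ℝ}
    (hL : Injective (L ∘ intCast)) {ν : Measure ℝ} [IsProbabilityMeasure ν] {n : ℕ} (hn : 0 < n)
    {x₀ : ℝ} (hν : ∀ᵐ y ∂ν, y - x₀ ∈ (L.toAddMonoidHom.comp (intCastAddHom d)).range)
    (hnx₀ : n • x₀ ∈ (L.toAddMonoidHom.comp (intCastAddHom d)).range) :
    ∃ ρ : Measure (Fin d → ℝ), IsProbabilityMeasure ρ ∧ ρ.map L = ν ∧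
      ∀ᵐ v ∂convPow ρ n, v ∈ (intCastAddHom d).range := by
  obtain ⟨k, hk⟩ := hnx₀
  set v₀ : Fin d → ℝ := (n : ℝ)⁻¹ • intCast k
  have hnv₀ : n • v₀ = intCast k := by
    rw [← Nat.cast_smul_eq_nsmul ℝ, smul_inv_smul₀ (by positivity)]
  have hLv₀ : L v₀ = x₀ := by
    rw [← nsmul_right_injective hn.ne' |>.eq_iff, ← map_nsmul, hnv₀]
    exact hk
  set f : (Fin d → ℤ) → (Fin d → ℝ) := fun m => v₀ + intCast m
  have hLf : MeasurableEmbedding (L ∘ f) := by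
    refine measurableEmbedding_of_injective_of_countable fun m m' h => hL ?_
    simpa [f] using h
  have hνf : ∀ᵐ y ∂ν, y ∈ Set.range (L ∘ f) := by
    filter_upwards [hν] with y ⟨m, hm⟩
    refine ⟨m, ?_⟩
    simp only [AddMonoidHom.coe_comp, comp_apply, intCastAddHom_apply,
      LinearMap.toAddMonoidHom_coe] at hm
    simp [f, hLv₀, hm]
  obtain ⟨ρ, hρL, hρ⟩ := exists_map_eq_of_ae_mem_range L.continuous_of_finiteDimensional.measurable
    hLf (Set.countable_range f).measurableSet hνf
  have : IsProbabilityMeasure (ρ.map L) := hρL ▸ inferInstance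
  have : IsProbabilityMeasure ρ := Measure.isProbabilityMeasure_of_map L
  refine ⟨ρ, this, hρL, ?_⟩
  have hρv₀ : ∀ᵐ v ∂ρ, v - v₀ ∈ (intCastAddHom d).range := by
    filter_upwards [hρ] with v ⟨m, hm⟩
    exact ⟨m, by simp [← hm, f, intCastAddHom_apply]⟩
  filter_upwards [ae_sub_nsmul_mem_convPow measurableSet_range_intCastAddHom hρv₀ n] with v hv
  simpa only [hnv₀, sub_add_cancel] using
    add_mem hv (⟨k, rfl⟩ : intCast k ∈ (intCastAddHom d).range)

end Lattice

theorem stmt10_general {d : ℕ} {Ω : Type*} [MeasurableSpace Ω] (P : Measure Ω)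
    (X : Ω → Fin d → ℝ) (hX : Measurable X)
    (hZd : ∀ ω, ∃ n : Fin d → ℤ, X ω = intCast n)
    (h : ∀ a : Fin d → ℝ, InfDiv (P.map (fun ω => ∑ j, a j * X ω j))) :
    InfDiv (P.map X) := by
  obtain ⟨a, ha⟩ := exists_linearIndependent_int_real d
  set L : (Fin d → ℝ) →ₗ[ℝ] ℝ := dotProductBilin ℝ ℝ a
  have hL : Measurable L := L.continuous_of_finiteDimensional.measurable
  have hT : MeasurableEmbedding (L ∘ intCastAddHom d) :=
    measurableEmbedding_of_injective_of_countable (injective_dotProduct_intCast ha)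
  have hXΛ : ∀ᵐ x ∂P.map X, x ∈ Set.range (intCastAddHom d) :=
    (ae_map_iff hX.aemeasurable measurableSet_range_intCastAddHom).2
      (ae_of_all _ fun ω => (hZd ω).imp fun m hm => hm.symm)
  intro n hn
  obtain ⟨ν, hν, hXν⟩ := h a n hn
  have hXL : (P.map X).map L = convPow ν n := by rw [Measure.map_map hL hX]; exact hXν
  have hνC : ∀ᵐ y ∂convPow ν n, y ∈ (L.toAddMonoidHom.comp (intCastAddHom d)).range := by
    rw [← hXL]
    exact (ae_map_iff hL.aemeasurable (Set.countable_range _).measurableSet).2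
      (hXΛ.mono fun x ⟨m, hm⟩ => ⟨m, by simp [← hm]⟩)
  obtain ⟨x₀, hx₀, hnx₀⟩ :=
    exists_ae_sub_mem_of_convPow (Set.countable_range _).measurableSet hn hνC
  obtain ⟨ρ, hρ, hρL, hρΛ⟩ := exists_map_eq_ae_convPow_mem_range hT.injective hn hx₀ hnx₀
  refine ⟨ρ, hρ, measurableEmbedding_of_injective_of_countable
    (intCastAddHom_injective d) |>.ext_of_map_eq hL hT hXΛ hρΛ ?_⟩
  rw [hXL, ← hρL]
  exact (map_convPow L.toAddMonoidHom hL ρ n).symm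

theorem stmt10 {d : ℕ} {Ω : Type*} [MeasurableSpace Ω] (P : Measure Ω) [IsProbabilityMeasure P]
    (X : Ω → Fin d → ℝ) (hX : Measurable X)
    (hZd : ∀ ω, ∃ n : Fin d → ℤ, X ω = intCast n)
    (h : ∀ a : Fin d → ℝ, InfDiv (P.map (fun ω => ∑ j, a j * X ω j))) :
    InfDiv (P.map X) :=
  stmt10_general P X hX hZd h
end

section
/- Let X be a ℤ^d-valued random vector and suppose there is a sequence (a(n))_{n∈ℕ} in ℝ^d \ {0} such that the closure of { a(n)/|a(n)| : n ∈ ℕ } in the unit sphere S^{d−1} has non-empty interior (relative topology of S^{d−1}), and a(n)^T X is infinitely divisible for each n. Then the characteristic function of X has no zero on ℝ^d. -/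
open MeasureTheory Complex Real Filter Topology

/-!
For an infinitely divisible law on `ℝ`, the elementary inequality
`1 - |φ(2t)|² ≤ 4 (1 - |φ(t)|²)`, applied to its `n`-th convolution roots (whose characteristic
functions are `φ^(1/n)`), gives `|φ(t)|⁴ ≤ |φ(2t)|` in the limit `n → ∞`. Along each direction
`a n` this doubling inequality, started from `|φ| ≥ 1/2` near the origin, bounds `|φ(t v)|` below
uniformly over the normalized directions `v`, hence also over their closure, which contains an
open piece `W` of the unit sphere. Since `X` is lattice-valued, `φ` is `2πℤ^d`-periodic, and
every point has a `2πℤ^d`-translate in the open cone `ℝ₊ • W`.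
-/

lemma pow_le_of_forall_one_sub_rpow_inv_le {x y : ℝ} {k : ℕ} (hx : 0 ≤ x) (hy : 0 ≤ y)
    (h : ∀ n : ℕ, 0 < n → 1 - y ^ (n⁻¹ : ℝ) ≤ k * (1 - x ^ (n⁻¹ : ℝ))) : x ^ k ≤ y := by
  rcases hx.eq_or_lt with rfl | hx_pos
  · rcases k.eq_zero_or_pos with rfl | hk
    · simpa using h 1 one_pos
    · simpa [zero_pow hk.ne'] using hy
  -- Since `x ^ (1 / n) ≥ 1 + log x / n`, the hypothesis gives `y ≥ (1 + k log x / n) ^ n → x ^ k`.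
  have hlower : ∀ᶠ n : ℕ in atTop, (1 + k * Real.log x / n) ^ n ≤ y := by
    filter_upwards [eventually_gt_atTop 0,
      tendsto_natCast_atTop_atTop.eventually_ge_atTop (-(k * Real.log x))] with n hn hnc
    have hn' : (0 : ℝ) < n := by exact_mod_cast hn
    have hroot : 1 + k * Real.log x / n ≤ y ^ (n⁻¹ : ℝ) := by
      have hexp : 1 + Real.log x / n ≤ x ^ (n⁻¹ : ℝ) := by
        rw [Real.rpow_def_of_pos hx_pos, ← div_eq_mul_inv, add_comm]
        exact Real.add_one_le_exp _
      have := h n hn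
      rw [mul_div_assoc]
      nlinarith [(k.cast_nonneg : (0 : ℝ) ≤ k)]
    calc (1 + k * Real.log x / n) ^ n ≤ (y ^ (n⁻¹ : ℝ)) ^ n := by
          refine pow_le_pow_left₀ ?_ hroot n
          have : 0 ≤ (n + k * Real.log x) / n := div_nonneg (by linarith) hn'.le
          rwa [add_div, div_self hn'.ne'] at this
      _ = y := Real.rpow_inv_natCast_pow hy hn.ne'
  have hlim := Real.tendsto_one_add_div_pow_exp (k * Real.log x)
  rw [Real.exp_nat_mul, Real.exp_log hx_pos] at hlim
  exact le_of_tendsto hlim hlower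

section Convolution

variable {V : Type*} [MeasurableSpace V] [AddMonoid V]

lemma mconv_eq_conv (μ ν : Measure V) : mconv μ ν = μ ∗ ν := rfl

instance isFiniteMeasure_convPow (μ : Measure V) [IsFiniteMeasure μ] (n : ℕ) :
    IsFiniteMeasure (convPow μ n) := by
  induction n with
  | zero => rw [convPow]; infer_instance
  | succ n ih => rw [convPow, mconv_eq_conv]; infer_instance

end Convolution

section CharFun

open scoped ComplexConjugate RealInnerProductSpace

variable {E : Type*} [NormedAddCommGroup E] [InnerProductSpace ℝ E] [MeasurableSpace E]
  [BorelSpace E]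

lemma charFun_map_neg (μ : Measure E) (t : E) :
    charFun (μ.map Neg.neg) t = conj (charFun μ t) := by
  rw [← charFun_neg, charFun_apply, charFun_apply, integral_map (by fun_prop) (by fun_prop)]
  simp [inner_neg_left, inner_neg_right]

lemma re_charFun_eq_integral_cos (μ : Measure E) [IsFiniteMeasure μ] (t : E) :
    (charFun μ t).re = ∫ x, Real.cos ⟪x, t⟫ ∂μ := by
  rw [charFun_apply, ← RCLike.re_eq_complex_re, ← integral_re]
  · simp [exp_ofReal_mul_I_re]
  · exact (integrable_const (1 : ℝ)).mono (by fun_prop) (by simp [norm_exp_ofReal_mul_I])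

lemma one_sub_re_charFun_two_smul_le (μ : Measure E) [IsProbabilityMeasure μ] (t : E) :
    1 - (charFun μ ((2 : ℝ) • t)).re ≤ 4 * (1 - (charFun μ t).re) := by
  have hcos (s : E) : Integrable (fun x => Real.cos ⟪x, s⟫) μ :=
    (integrable_const (1 : ℝ)).mono (by fun_prop) (by simp [Real.abs_cos_le_one])
  have hpoint (x : E) : 1 - Real.cos ⟪x, (2 : ℝ) • t⟫ ≤ 4 * (1 - Real.cos ⟪x, t⟫) := by
    rw [inner_smul_right, Real.cos_two_mul]
    nlinarith [Real.cos_le_one ⟪x, t⟫, Real.neg_one_le_cos ⟪x, t⟫]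
  rw [re_charFun_eq_integral_cos, re_charFun_eq_integral_cos]
  calc 1 - ∫ x, Real.cos ⟪x, (2 : ℝ) • t⟫ ∂μ = ∫ x, (1 - Real.cos ⟪x, (2 : ℝ) • t⟫) ∂μ := by
        rw [integral_sub (integrable_const 1) (hcos _)]; simp
    _ ≤ ∫ x, 4 * (1 - Real.cos ⟪x, t⟫) ∂μ :=
        integral_mono ((integrable_const 1).sub (hcos _))
          (((integrable_const 1).sub (hcos t)).const_mul 4) hpoint
    _ = 4 * (1 - ∫ x, Real.cos ⟪x, t⟫ ∂μ) := by
        rw [integral_const_mul, integral_sub (integrable_const 1) (hcos t)]; simp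

variable [SecondCountableTopology E]

lemma charFun_convPow (μ : Measure E) [IsFiniteMeasure μ] (n : ℕ) (t : E) :
    charFun (convPow μ n) t = charFun μ t ^ n := by
  induction n with
  | zero => simp [convPow]
  | succ n ih => rw [convPow, mconv_eq_conv, charFun_conv, ih, pow_succ']

lemma charFun_conv_map_neg (μ : Measure E) [IsFiniteMeasure μ] (t : E) :
    charFun (μ ∗ μ.map Neg.neg) t = (‖charFun μ t‖ ^ 2 : ℝ) := by
  rw [charFun_conv, charFun_map_neg, mul_conj, normSq_eq_norm_sq]

lemma one_sub_norm_charFun_two_smul_sq_le (μ : Measure E) [IsProbabilityMeasure μ] (t : E) :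
    1 - ‖charFun μ ((2 : ℝ) • t)‖ ^ 2 ≤ 4 * (1 - ‖charFun μ t‖ ^ 2) := by
  have : IsProbabilityMeasure (μ.map Neg.neg) := Measure.isProbabilityMeasure_map (by fun_prop)
  have h := one_sub_re_charFun_two_smul_le (μ ∗ μ.map Neg.neg) t
  rwa [charFun_conv_map_neg, charFun_conv_map_neg, ofReal_re, ofReal_re] at h

theorem InfDiv.norm_charFun_pow_four_le {μ : Measure E} (h : InfDiv μ) (t : E) :
    ‖charFun μ t‖ ^ 4 ≤ ‖charFun μ ((2 : ℝ) • t)‖ := by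
  have key : (‖charFun μ t‖ ^ 2) ^ 4 ≤ ‖charFun μ ((2 : ℝ) • t)‖ ^ 2 := by
    refine pow_le_of_forall_one_sub_rpow_inv_le (by positivity) (by positivity) fun n hn => ?_
    obtain ⟨ρ, hρ, rfl⟩ := h n hn
    have hroot (s : E) : (‖charFun (convPow ρ n) s‖ ^ 2) ^ (n⁻¹ : ℝ) = ‖charFun ρ s‖ ^ 2 := by
      rw [charFun_convPow, norm_pow, ← pow_mul, mul_comm, pow_mul,
        Real.pow_rpow_inv_natCast (by positivity) hn.ne']
    rw [hroot, hroot]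
    exact_mod_cast one_sub_norm_charFun_two_smul_sq_le ρ t
  rw [← pow_mul, mul_comm, pow_mul] at key
  exact (pow_le_pow_iff_left₀ (by positivity) (norm_nonneg _) two_ne_zero).1 key

end CharFun

lemma pow_pow_le_of_pow_le_comp_two_mul {g : ℝ → ℝ} {m : ℕ} (hg : ∀ t, g t ^ m ≤ g (2 * t))
    {c δ : ℝ} (hc : 0 ≤ c) (hδ : ∀ s, |s| ≤ δ → c ≤ g s) (k : ℕ) {t : ℝ}
    (ht : |t| ≤ 2 ^ k * δ) : c ^ m ^ k ≤ g t := by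
  induction k generalizing t with
  | zero => simpa using hδ t (by simpa using ht)
  | succ k ih =>
    have hhalf : |t / 2| ≤ 2 ^ k * δ := by
      rw [abs_div, abs_two, div_le_iff₀ two_pos]
      rw [pow_succ] at ht
      linarith
    calc c ^ m ^ (k + 1) = (c ^ m ^ k) ^ m := by rw [pow_succ, pow_mul]
      _ ≤ g (t / 2) ^ m := pow_le_pow_left₀ (by positivity) (ih hhalf) m
      _ ≤ g t := by simpa [mul_div_cancel₀] using hg (t / 2)

section NormedSpace

variable {E : Type*} [NormedAddCommGroup E] [NormedSpace ℝ E]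

theorem apply_smul_ne_zero_of_mem_closure {φ : E → ℂ} (hφ : Continuous φ) (hφ0 : φ 0 = 1)
    {D : Set E} (hD : Bornology.IsBounded D) {m : ℕ}
    (hdoub : ∀ v ∈ D, ∀ t : ℝ, ‖φ (t • v)‖ ^ m ≤ ‖φ ((2 * t) • v)‖) :
    ∀ v ∈ closure D, ∀ t : ℝ, φ (t • v) ≠ 0 := by
  intro v hv t
  obtain ⟨R, hR, hDR⟩ := hD.exists_pos_norm_le
  obtain ⟨ε, hε, hball⟩ : ∃ ε > 0, ∀ w : E, ‖w‖ < ε → 1 / 2 < ‖φ w‖ := by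
    have : ∀ᶠ w in 𝓝 (0 : E), 1 / 2 < ‖φ w‖ :=
      (hφ.norm.tendsto 0).eventually_const_lt (by norm_num [hφ0])
    simpa using Metric.eventually_nhds_iff.1 this
  obtain ⟨k, hk⟩ := pow_unbounded_of_one_lt (|t| / (ε / (2 * R))) one_lt_two
  have hbound : D ⊆ {u | (1 / 2 : ℝ) ^ m ^ k ≤ ‖φ (t • u)‖} := by
    intro u hu
    refine pow_pow_le_of_pow_le_comp_two_mul (g := fun s => ‖φ (s • u)‖) (δ := ε / (2 * R))
      (hdoub u hu) (by norm_num) (fun s hs => (hball _ ?_).le) k ?_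
    · calc ‖s • u‖ = |s| * ‖u‖ := by rw [norm_smul, Real.norm_eq_abs]
        _ ≤ ε / (2 * R) * R := mul_le_mul hs (hDR u hu) (norm_nonneg _) (by positivity)
        _ < ε := by field_simp; linarith
    · rw [div_lt_iff₀ (by positivity)] at hk
      exact hk.le
  have hclosed : IsClosed {u | (1 / 2 : ℝ) ^ m ^ k ≤ ‖φ (t • u)‖} :=
    isClosed_le continuous_const (hφ.comp (continuous_const_smul t)).norm
  intro h0
  have := closure_minimal hbound hclosed hv
  simp only [Set.mem_ofPred_eq, h0, norm_zero] at this
  exact (pow_pos (by norm_num : (0 : ℝ) < 1 / 2) _).not_ge this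

lemma norm_mul_norm_inv_norm_smul_sub_le {w : E} (hw : ‖w‖ = 1) (y : E) {R : ℝ} (hR : 0 ≤ R) :
    ‖y‖ * ‖‖y‖⁻¹ • y - w‖ ≤ 2 * ‖y - R • w‖ := by
  rcases eq_or_ne y 0 with rfl | hy
  · simp
  have hsplit : ‖y‖ • (‖y‖⁻¹ • y - w) = (y - R • w) + (R - ‖y‖) • w := by
    rw [smul_sub, smul_smul, mul_inv_cancel₀ (norm_ne_zero_iff.2 hy), one_smul, sub_smul]
    abel
  have hR_sub : |R - ‖y‖| ≤ ‖y - R • w‖ := by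
    calc |R - ‖y‖| = |‖R • w‖ - ‖y‖| := by
          rw [norm_smul, hw, mul_one, Real.norm_of_nonneg hR]
      _ ≤ ‖R • w - y‖ := abs_norm_sub_norm_le _ _
      _ = ‖y - R • w‖ := norm_sub_rev _ _
  calc ‖y‖ * ‖‖y‖⁻¹ • y - w‖ = ‖(y - R • w) + (R - ‖y‖) • w‖ := by
        rw [← hsplit, norm_smul, Real.norm_of_nonneg (norm_nonneg y)]
    _ ≤ ‖y - R • w‖ + |R - ‖y‖| := by
        refine (norm_add_le _ _).trans_eq ?_
        rw [norm_smul, hw, mul_one, Real.norm_eq_abs]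
    _ ≤ 2 * ‖y - R • w‖ := by linarith

theorem exists_add_eq_smul_of_isOpen {L : Set E} {r : ℝ} (hL : ∀ x, ∃ ℓ ∈ L, ‖x - ℓ‖ ≤ r)
    {U : Set E} (hU : IsOpen U) {w : E} (hwU : w ∈ U) (hw : ‖w‖ = 1) (z : E) :
    ∃ ℓ ∈ L, ∃ t : ℝ, ∃ u ∈ U, ‖u‖ = 1 ∧ z + ℓ = t • u := by
  obtain ⟨ε, hε, hball⟩ := Metric.isOpen_iff.1 hU w hwU
  have hr : 0 ≤ r := by
    obtain ⟨ℓ, -, h⟩ := hL 0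
    exact (norm_nonneg _).trans h
  -- `y := z + ℓ` is within `r` of `R • w`, so its direction is within `2r / (R - r) < ε` of `w`.
  set R := 2 * r / ε + r + 1
  obtain ⟨ℓ, hℓ, hdist⟩ := hL (R • w - z)
  have hy : ‖(z + ℓ) - R • w‖ ≤ r := by
    rwa [← norm_neg, show -((z + ℓ) - R • w) = R • w - z - ℓ by abel]
  set y := z + ℓ
  have hRy : R - r ≤ ‖y‖ := by
    have := norm_sub_norm_le (R • w) y
    rw [norm_smul, hw, mul_one, Real.norm_of_nonneg (by positivity), norm_sub_rev] at this
    linarith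
  have hεy : 2 * r < ε * ‖y‖ := by
    have : 2 * r / ε < ‖y‖ := by linarith
    rwa [div_lt_iff₀' hε] at this
  have hy0 : 0 < ‖y‖ := by nlinarith
  refine ⟨ℓ, hℓ, ‖y‖, ‖y‖⁻¹ • y, hball ?_, norm_smul_inv_norm (norm_pos_iff.1 hy0), ?_⟩
  · have := norm_mul_norm_inv_norm_smul_sub_le hw y (R := R) (by positivity)
    rw [Metric.mem_ball, dist_eq_norm]
    nlinarith
  · rw [smul_smul, mul_inv_cancel₀ hy0.ne', one_smul]

end NormedSpace

section Lattice

variable {d : ℕ}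

lemma enorm'_eq_norm (x : Fin d → ℝ) : enorm' x = ‖(EuclideanSpace.equiv (Fin d) ℝ).symm x‖ := by
  simp [enorm', EuclideanSpace.norm_eq]

lemma norm_le_enorm' (x : Fin d → ℝ) : ‖x‖ ≤ enorm' x := by
  rw [enorm'_eq_norm]
  exact (pi_norm_le_iff_of_nonneg (norm_nonneg _)).2 fun j =>
    PiLp.norm_apply_le ((EuclideanSpace.equiv (Fin d) ℝ).symm x) j

lemma isBounded_setOf_exists_eq_enorm'_inv_smul {ι : Type*} (a : ι → Fin d → ℝ) :
    Bornology.IsBounded {x | ∃ n, x = (enorm' (a n))⁻¹ • a n} := by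
  refine isBounded_iff_forall_norm_le.2 ⟨1, ?_⟩
  rintro _ ⟨n, rfl⟩
  calc ‖(enorm' (a n))⁻¹ • a n‖ ≤ enorm' ((enorm' (a n))⁻¹ • a n) := norm_le_enorm' _
    _ = (enorm' (a n))⁻¹ * enorm' (a n) := by
        rw [enorm'_eq_norm, enorm'_eq_norm, map_smul, norm_smul,
          Real.norm_of_nonneg (by positivity)]
    _ ≤ 1 := inv_mul_le_one_of_le₀ le_rfl (Real.sqrt_nonneg _)

lemma exists_norm_sub_two_pi_smul_intCast_le (x : Fin d → ℝ) :
    ∃ m : Fin d → ℤ, ‖x - (2 * π) • intCast m‖ ≤ π := by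
  refine ⟨fun j => round (x j / (2 * π)), (pi_norm_le_iff_of_nonneg pi_pos.le).2 fun j => ?_⟩
  have h := abs_sub_round (x j / (2 * π))
  have hx : x j - 2 * π * round (x j / (2 * π))
      = 2 * π * (x j / (2 * π) - round (x j / (2 * π))) := by field_simp
  simp only [Pi.sub_apply, Pi.smul_apply, intCast, smul_eq_mul, Real.norm_eq_abs]
  rw [hx, abs_mul, abs_of_pos two_pi_pos]
  nlinarith [pi_pos]

theorem exists_add_two_pi_smul_intCast_eq_smul {U : Set (Fin d → ℝ)} (hU : IsOpen U)
    {w : Fin d → ℝ} (hwU : w ∈ U) (hw : enorm' w = 1) (z : Fin d → ℝ) :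
    ∃ m : Fin d → ℤ, ∃ t : ℝ, ∃ u ∈ U, enorm' u = 1 ∧ z + (2 * π) • intCast m = t • u := by
  set e := EuclideanSpace.equiv (Fin d) ℝ
  set e' : (Fin d → ℝ) →L[ℝ] EuclideanSpace ℝ (Fin d) := e.symm.toContinuousLinearMap
  have hL : ∀ x, ∃ ℓ ∈ Set.range fun m : Fin d → ℤ => e.symm ((2 * π) • intCast m),
      ‖x - ℓ‖ ≤ ‖e'‖ * π := by
    intro x
    obtain ⟨m, hm⟩ := exists_norm_sub_two_pi_smul_intCast_le (e x)
    refine ⟨_, ⟨m, rfl⟩, ?_⟩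
    calc ‖x - e.symm ((2 * π) • intCast m)‖ = ‖e' (e x - (2 * π) • intCast m)‖ := by simp [e']
      _ ≤ ‖e'‖ * ‖e x - (2 * π) • intCast m‖ := e'.le_opNorm _
      _ ≤ ‖e'‖ * π := by gcongr
  obtain ⟨_, ⟨m, rfl⟩, t, u, hu, hu1, h⟩ := exists_add_eq_smul_of_isOpen hL
    (hU.preimage e.continuous) (w := e.symm w) (by simpa using hwU) (by rwa [← enorm'_eq_norm])
    (e.symm z)
  refine ⟨m, t, e u, hu, by rwa [enorm'_eq_norm, ContinuousLinearEquiv.symm_apply_apply], ?_⟩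
  simpa using congrArg e h

lemma charFun_eq_charFun_map_toLp (μ : Measure (Fin d → ℝ)) (z : Fin d → ℝ) :
    charFun μ z = MeasureTheory.charFun (μ.map (WithLp.toLp 2)) (WithLp.toLp 2 z) := by
  rw [MeasureTheory.charFun_apply, ← MeasurableEquiv.coe_toLp, integral_map_equiv]
  simp [_root_.charFun, PiLp.inner_apply, mul_comm]

lemma charFun_map_sum_mul (μ : Measure (Fin d → ℝ)) (c : Fin d → ℝ) (t : ℝ) :
    MeasureTheory.charFun (μ.map fun x => ∑ j, c j * x j) t = charFun μ (t • c) := by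
  have hmeas : Measurable fun x : Fin d → ℝ => ∑ j, c j * x j := by fun_prop
  rw [charFun_apply_real, integral_map hmeas.aemeasurable (by fun_prop)]
  refine integral_congr_ae (ae_of_all _ fun x => ?_)
  simp only [Pi.smul_apply, smul_eq_mul]
  push_cast
  rw [Finset.mul_sum, Finset.sum_mul, Finset.mul_sum]
  congr 1
  exact Finset.sum_congr rfl fun j _ => by ring

lemma norm_charFun_smul_pow_four_le_of_infDiv_map {μ : Measure (Fin d → ℝ)} {c : Fin d → ℝ}
    (h : InfDiv (μ.map fun x => ∑ j, c j * x j)) (s t : ℝ) :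
    ‖charFun μ (t • s • c)‖ ^ 4 ≤ ‖charFun μ ((2 * t) • s • c)‖ := by
  have := h.norm_charFun_pow_four_le (t * s)
  rw [smul_smul, smul_smul]
  rwa [smul_eq_mul, ← mul_assoc, charFun_map_sum_mul, charFun_map_sum_mul] at this

lemma charFun_add_two_pi_smul_intCast {μ : Measure (Fin d → ℝ)}
    (hμ : ∀ᵐ x ∂μ, x ∈ Set.range intCast) (z : Fin d → ℝ) (m : Fin d → ℤ) :
    charFun μ (z + (2 * π) • intCast m) = charFun μ z := by
  refine integral_congr_ae ?_
  filter_upwards [hμ] with x hx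
  obtain ⟨n, rfl⟩ := hx
  have hsum : ∑ j, (z + (2 * π) • intCast m) j * intCast n j
      = ∑ j, z j * intCast n j + ((∑ j, m j * n j : ℤ) : ℝ) * (2 * π) := by
    simp only [Pi.add_apply, Pi.smul_apply, smul_eq_mul, intCast, add_mul, Finset.sum_add_distrib]
    push_cast
    rw [Finset.sum_mul]
    congr 1
    exact Finset.sum_congr rfl fun j _ => by ring
  have hone : cexp (I * ↑(((∑ j, m j * n j : ℤ) : ℝ) * (2 * π))) = 1 := by
    rw [← exp_int_mul_two_pi_mul_I (∑ j, m j * n j)]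
    push_cast
    ring_nf
  rw [hsum, ofReal_add, mul_add, Complex.exp_add, hone, mul_one]

end Lattice

theorem stmt12_general {d : ℕ} {Ω : Type*} [MeasurableSpace Ω] (P : Measure Ω) [IsProbabilityMeasure P]
    (X : Ω → Fin d → ℝ) (hX : Measurable X)
    (hZd : ∀ ω, ∃ n : Fin d → ℤ, X ω = intCast n)
    (a : ℕ → Fin d → ℝ)
    (hU : ∃ U : Set (Fin d → ℝ), IsOpen U ∧
      (U ∩ {x | enorm' x = 1}).Nonempty ∧
      U ∩ {x | enorm' x = 1} ⊆ closure {x | ∃ n : ℕ, x = (enorm' (a n))⁻¹ • a n})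
    (hID : ∀ n : ℕ, InfDiv (P.map (fun ω => ∑ j, a n j * X ω j))) :
    ∀ z : Fin d → ℝ, charFun (P.map X) z ≠ 0 := by
  obtain ⟨U, hUo, ⟨w, hwU, hw⟩, hUD⟩ := hU
  set μ := P.map X
  have : IsProbabilityMeasure μ := Measure.isProbabilityMeasure_map hX.aemeasurable
  have : IsProbabilityMeasure (μ.map (WithLp.toLp 2)) :=
    Measure.isProbabilityMeasure_map (by fun_prop)
  have hφ : charFun μ = fun z => MeasureTheory.charFun (μ.map (WithLp.toLp 2)) (WithLp.toLp 2 z) :=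
    funext (charFun_eq_charFun_map_toLp μ)
  have hproj (n : ℕ) : P.map (fun ω => ∑ j, a n j * X ω j) = μ.map fun x => ∑ j, a n j * x j :=
    (Measure.map_map (by fun_prop : Measurable fun x : Fin d → ℝ => ∑ j, a n j * x j) hX).symm
  have hray := apply_smul_ne_zero_of_mem_closure (φ := charFun μ)
    (by rw [hφ]; exact continuous_charFun.comp (PiLp.continuous_toLp 2 _)) (by simp [hφ])
    (isBounded_setOf_exists_eq_enorm'_inv_smul a) (by
      rintro _ ⟨n, rfl⟩
      exact norm_charFun_smul_pow_four_le_of_infDiv_map (hproj n ▸ hID n) _)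
  have hμ : ∀ᵐ x ∂μ, x ∈ Set.range intCast :=
    (ae_map_iff hX.aemeasurable (Set.countable_range _).measurableSet).2
      (ae_of_all _ fun ω => (hZd ω).imp fun _ h => h.symm)
  intro z
  obtain ⟨m, t, u, hu, hu1, hzu⟩ := exists_add_two_pi_smul_intCast_eq_smul hUo hwU hw z
  rw [← charFun_add_two_pi_smul_intCast hμ z m, hzu]
  exact hray u (hUD ⟨hu, hu1⟩) t

theorem stmt12 {d : ℕ} {Ω : Type*} [MeasurableSpace Ω] (P : Measure Ω) [IsProbabilityMeasure P]
    (X : Ω → Fin d → ℝ) (hX : Measurable X)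
    (hZd : ∀ ω, ∃ n : Fin d → ℤ, X ω = intCast n)
    (a : ℕ → Fin d → ℝ) (ha : ∀ n, a n ≠ 0)
    (hU : ∃ U : Set (Fin d → ℝ), IsOpen U ∧
      (U ∩ {x | enorm' x = 1}).Nonempty ∧
      U ∩ {x | enorm' x = 1} ⊆ closure {x | ∃ n : ℕ, x = (enorm' (a n))⁻¹ • a n})
    (hID : ∀ n : ℕ, InfDiv (P.map (fun ω => ∑ j, a n j * X ω j))) :
    ∀ z : Fin d → ℝ, charFun (P.map X) z ≠ 0 :=
  stmt12_general P X hX hZd a hU hID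
end

section
/- Let U be a nonempty open subset of S^{d−1} in the relative topology. Then there exists R > 0 and v ∈ ℝ^d such that the cone U_R := { r c : r ∈ (R,∞), c ∈ U } contains the cube v + [0,2π]^d. -/
open MeasureTheory Complex Real Filter Topology

/-! Pick `c ∈ U`. The points `y` with `enorm' y > 1/2` whose radial projection lies in `V` form an
open neighbourhood `W` of `c`. Shrinking the cube `t • c + [0, 2π]^d` by the factor `t⁻¹` gives
`c + t⁻¹ • [0, 2π]^d`, which lies in `W` once `t` is large. Radial projection commutes with
positive scaling, so every point `x` of the cube projects into `V ∩ S^{d-1} = U`, and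
`enorm' x = t * enorm' (t⁻¹ • x) > t / 2 ≥ 1`. -/

lemma enorm'_smul {d : ℕ} (r : ℝ) (x : Fin d → ℝ) : enorm' (r • x) = |r| * enorm' x := by
  simp only [enorm', Pi.smul_apply, smul_eq_mul, mul_pow, ← Finset.mul_sum]
  rw [Real.sqrt_mul (sq_nonneg r), Real.sqrt_sq_eq_abs]

lemma enorm'_nonneg {d : ℕ} (x : Fin d → ℝ) : 0 ≤ enorm' x := Real.sqrt_nonneg _

lemma continuous_enorm' {d : ℕ} : Continuous (enorm' (d := d)) :=
  (continuous_finsetSum _ fun j _ => (continuous_apply j).pow 2).sqrt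

-- junk value `0` at the origin
noncomputable def radialProj {d : ℕ} (x : Fin d → ℝ) : Fin d → ℝ := (enorm' x)⁻¹ • x

lemma enorm'_radialProj {d : ℕ} {x : Fin d → ℝ} (hx : enorm' x ≠ 0) :
    enorm' (radialProj x) = 1 := by
  rw [radialProj, enorm'_smul, abs_inv, abs_of_nonneg (enorm'_nonneg x), inv_mul_cancel₀ hx]

lemma enorm'_smul_radialProj {d : ℕ} {x : Fin d → ℝ} (hx : enorm' x ≠ 0) :
    enorm' x • radialProj x = x :=
  smul_inv_smul₀ hx x

lemma radialProj_smul_of_pos {d : ℕ} {t : ℝ} (ht : 0 < t) (x : Fin d → ℝ) :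
    radialProj (t • x) = radialProj x := by
  rw [radialProj, radialProj, enorm'_smul, abs_of_pos ht, smul_smul]
  congr 1
  field_simp

lemma continuousOn_radialProj {d : ℕ} :
    ContinuousOn (radialProj (d := d)) {x | enorm' x ≠ 0} := fun _ hx =>
  ((continuous_enorm'.continuousAt.inv₀ hx).smul continuousAt_id).continuousWithinAt

lemma isOpen_setOf_lt_enorm'_and_radialProj_mem {d : ℕ} {a : ℝ} (ha : 0 ≤ a)
    {V : Set (Fin d → ℝ)} (hV : IsOpen V) :
    IsOpen {x | a < enorm' x ∧ radialProj x ∈ V} :=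
  (continuousOn_radialProj.mono fun _ hx => (ha.trans_lt hx).ne').isOpen_inter_preimage
    (isOpen_lt continuous_const continuous_enorm') hV

lemma eventually_forall_add_inv_smul_mem {E : Type*} [NormedAddCommGroup E] [NormedSpace ℝ E]
    {W K : Set E} {c : E} (hW : IsOpen W) (hc : c ∈ W) (hK : Bornology.IsBounded K) :
    ∀ᶠ t : ℝ in atTop, ∀ k ∈ K, c + t⁻¹ • k ∈ W := by
  obtain ⟨ε, hε, hball⟩ := Metric.isOpen_iff.1 hW c hc
  obtain ⟨M, hM, hKM⟩ := hK.subset_ball_lt 0 0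
  filter_upwards [eventually_gt_atTop (M / ε)] with t ht k hk
  have htpos : 0 < t := (div_pos hM hε).trans ht
  apply hball
  have hk' : ‖k‖ < M := by simpa using hKM hk
  rw [Metric.mem_ball, dist_self_add_left, norm_smul, norm_inv, Real.norm_of_nonneg htpos.le,
    inv_mul_lt_iff₀ htpos]
  calc ‖k‖ < M := hk'
    _ < t * ε := (div_lt_iff₀ hε).1 ht

theorem stmt15 {d : ℕ} (U : Set (Fin d → ℝ))
    (hrel : ∃ V : Set (Fin d → ℝ), IsOpen V ∧ U = V ∩ {x | enorm' x = 1})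
    (hne : U.Nonempty) :
    ∃ R > (0 : ℝ), ∃ v : Fin d → ℝ,
      {x : Fin d → ℝ | ∀ j, v j ≤ x j ∧ x j ≤ v j + 2 * π} ⊆
        {x : Fin d → ℝ | ∃ r > R, ∃ c ∈ U, x = r • c} := by
  obtain ⟨V, hV, rfl⟩ := hrel
  obtain ⟨c, hcV, hc⟩ := hne
  have hcW : c ∈ {y | 1 / 2 < enorm' y ∧ radialProj y ∈ V} := by
    refine ⟨by rw [hc.out]; norm_num, ?_⟩
    rwa [radialProj, hc.out, inv_one, one_smul]
  obtain ⟨t, ht, hcube⟩ := ((eventually_ge_atTop 2).and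
    (eventually_forall_add_inv_smul_mem (isOpen_setOf_lt_enorm'_and_radialProj_mem
      (by norm_num) hV) hcW (Metric.isBounded_Icc 0 fun _ => 2 * π))).exists
  have htpos : (0 : ℝ) < t := by linarith
  refine ⟨1, one_pos, t • c, fun x hx => ?_⟩
  have hxt : t • (t⁻¹ • x) = x := smul_inv_smul₀ htpos.ne' x
  obtain ⟨hnorm, hproj⟩ : 1 / 2 < enorm' (t⁻¹ • x) ∧ radialProj (t⁻¹ • x) ∈ V := by
    have := hcube (x - t • c)
      ⟨fun j => sub_nonneg.2 (hx j).1, fun j => sub_le_iff_le_add'.2 (hx j).2⟩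
    rwa [smul_sub, smul_smul, inv_mul_cancel₀ htpos.ne', one_smul, add_sub_cancel] at this
  have hx1 : 1 < enorm' x := by
    rw [← hxt, enorm'_smul, abs_of_pos htpos]
    nlinarith
  have hx0 : enorm' x ≠ 0 := (one_pos.trans hx1).ne'
  refine ⟨enorm' x, hx1, radialProj x, ⟨?_, enorm'_radialProj hx0⟩,
    (enorm'_smul_radialProj hx0).symm⟩
  rwa [← hxt, radialProj_smul_of_pos htpos]
end
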